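/- arXiv:1006.2780 — 5 statements merged into one kernel-verified Lean document; each statement's English description precedes it below -/
import Mathlib

section
/- With the setup of the previous statement, if additionally h(x) = 1 for almost every x ∈ (-2, 2), then ξ(t) = 1 for almost every t ∈ (-R, -2) and ξ(t) = 0 for almost every t ∈ (2, R). -/
/-!
Fix a point `x ∈ (-2, 2)` with `h x = 1`, so that the exponent vanishes at `x`. On `[-R, -2]` the
integrand `(ξ t - 1) / (t - x)` is a quotient of two nonpositive numbers, and on `[2, R]` the
integrand `ξ t / (t - x)` one of two nonnegative numbers. A sum of integrals of nonnegative
functions vanishes only if both integrands vanish a.e., and since `t ≠ x` this forces `ξ = 1`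
a.e. on `(-R, -2)` and `ξ = 0` a.e. on `(2, R)`.
-/

open MeasureTheory Real Set Filter
open scoped Interval

theorem IntervalIntegrable.div_sub_const {μ : Measure ℝ} [IsLocallyFiniteMeasure μ]
    {f : ℝ → ℝ} {a b x : ℝ} (hf : IntervalIntegrable f μ a b) (hx : x ∉ [[a, b]]) :
    IntervalIntegrable (fun t ↦ f t / (t - x)) μ a b := by
  have hinv : ContinuousOn (fun t ↦ (t - x)⁻¹) [[a, b]] :=
    (continuousOn_id.sub continuousOn_const).inv₀ fun t ht ↦
      sub_ne_zero.2 <| ne_of_mem_of_not_mem ht hx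
  simpa only [div_eq_mul_inv] using hf.mul_continuousOn hinv

theorem intervalIntegral.ae_eq_zero_of_integral_add_eq_zero {μ : Measure ℝ} {f g : ℝ → ℝ}
    {a b c d : ℝ} (hab : a ≤ b) (hcd : c ≤ d) (hf : ∀ t ∈ Icc a b, 0 ≤ f t)
    (hg : ∀ t ∈ Icc c d, 0 ≤ g t) (hfi : IntervalIntegrable f μ a b)
    (hgi : IntervalIntegrable g μ c d)
    (h : (∫ t in a..b, f t ∂μ) + ∫ t in c..d, g t ∂μ = 0) :
    f =ᵐ[μ.restrict (Ioc a b)] 0 ∧ g =ᵐ[μ.restrict (Ioc c d)] 0 := by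
  have hf₀ := intervalIntegral.integral_nonneg (μ := μ) hab hf
  have hg₀ := intervalIntegral.integral_nonneg (μ := μ) hcd hg
  have hf' : 0 ≤ᵐ[μ.restrict (Ioc a b)] f :=
    (ae_restrict_iff' measurableSet_Ioc).2 <| ae_of_all _ fun t ht ↦ hf t (Ioc_subset_Icc_self ht)
  have hg' : 0 ≤ᵐ[μ.restrict (Ioc c d)] g :=
    (ae_restrict_iff' measurableSet_Ioc).2 <| ae_of_all _ fun t ht ↦ hg t (Ioc_subset_Icc_self ht)
  exact ⟨(intervalIntegral.integral_eq_zero_iff_of_le_of_nonneg_ae hab hf' hfi).1 (by linarith),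
    (intervalIntegral.integral_eq_zero_iff_of_le_of_nonneg_ae hcd hg' hgi).1 (by linarith)⟩

/-- With the setup of Statement 0, if `h(x) = 1` for a.e. `x ∈ (-2,2)`,
then `ξ = 1` a.e. on `(-R,-2)` and `ξ = 0` a.e. on `(2,R)`. -/
theorem stmt_1 (R : ℝ) (hR : 2 < R) (ξ : ℝ → ℝ) (hmeas : Measurable ξ)
    (hξ0 : ∀ t, 0 ≤ ξ t) (hξ1 : ∀ t, ξ t ≤ 1)
    (h : ℝ → ℝ)
    (hh : ∀ x, h x = Real.exp ((∫ t in (-R)..(-2), (ξ t - 1) / (t - x)) +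
      ∫ t in (2:ℝ)..R, ξ t / (t - x)))
    (heq : ∀ᵐ x ∂(volume.restrict (Set.Ioo (-2:ℝ) 2)), h x = 1) :
    (∀ᵐ t ∂(volume.restrict (Set.Ioo (-R) (-2))), ξ t = 1) ∧
    (∀ᵐ t ∂(volume.restrict (Set.Ioo (2:ℝ) R)), ξ t = 0) := by
  obtain ⟨x, ⟨hx₁, hx₂⟩, hhx⟩ :=
    Measure.exists_mem_of_measure_ne_zero_of_ae (by simp) heq
  have hexponent :
      (∫ t in (-R)..(-2), (ξ t - 1) / (t - x)) + ∫ t in (2:ℝ)..R, ξ t / (t - x) = 0 :=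
    Real.exp_eq_one_iff _ |>.1 (hh x ▸ hhx)
  have hξint (a b : ℝ) : IntervalIntegrable ξ volume a b :=
    intervalIntegrable_const.mono_fun' hmeas.aestronglyMeasurable <| ae_of_all _ fun t ↦
      (abs_le.2 ⟨by linarith [hξ0 t], hξ1 t⟩ : |ξ t| ≤ 1)
  have hx_left : x ∉ [[-R, -2]] := by
    rw [uIcc_of_le (by linarith)]; exact fun ht ↦ by linarith [ht.2]
  have hx_right : x ∉ [[2, R]] := by
    rw [uIcc_of_le hR.le]; exact fun ht ↦ by linarith [ht.1]
  obtain ⟨hleft, hright⟩ := intervalIntegral.ae_eq_zero_of_integral_add_eq_zero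
    (by linarith : -R ≤ -2) hR.le
    (fun t ht ↦ div_nonneg_of_nonpos (by linarith [hξ1 t]) (by linarith [ht.2]))
    (fun t ht ↦ div_nonneg (hξ0 t) (by linarith [ht.1]))
    (((hξint _ _).sub intervalIntegrable_const).div_sub_const hx_left)
    ((hξint _ _).div_sub_const hx_right) hexponent
  constructor
  · filter_upwards [ae_restrict_of_ae_restrict_of_subset Ioo_subset_Ioc_self hleft,
      ae_restrict_mem measurableSet_Ioo] with t ht htI
    have : t - x ≠ 0 := by linarith [htI.2]
    simpa [sub_eq_zero, this] using ht
  · filter_upwards [ae_restrict_of_ae_restrict_of_subset Ioo_subset_Ioc_self hright,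
      ae_restrict_mem measurableSet_Ioo] with t ht htI
    have : t - x ≠ 0 := by linarith [htI.1]
    simpa [this] using ht
end

section
/- Let ξ : [-R, R] → [0, 1] be measurable with ξ = 1/2 a.e. on (-2, 2), and define H(z) = (z + R) exp(∫_{-R}^{R} ξ(t)/(t - z) dt) for z in the upper half plane. Then for almost every x ∈ (-2, 2), the boundary value H(x) = lim_{y→0+} H(x + iy) exists and satisfies Re H(x) = 0 and Im H(x) = |H(x)| > 0. -/
/-!
Where `ξ = 1/2` the Cauchy integral is explicit: `∫_{-2}^{2} (1/2)/(t - z) dt =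
(log (2 - z) - log (-2 - z))/2`. As `z → x ∈ (-2,2)` from the upper half plane, `-2 - z` tends to
the negative real axis from below, so its logarithm tends to `log (x + 2) - π i`, while the
integrals over `[-R,-2]` and `[2,R]` are continuous at `x` and real there. Hence the exponent tends
to some `r + π i/2` with `r` real, and `H` tends to `(x + R) e^r i`.
-/

open MeasureTheory Complex Filter Real

open scoped Topology

lemma norm_ofReal_div_le {a M d : ℝ} {w : ℂ} (ha : |a| ≤ M) (hd : 0 < d) (hw : d ≤ ‖w‖) :
    ‖(a : ℂ) / w‖ ≤ M / d := by
  rw [norm_div, norm_real, Real.norm_eq_abs]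
  exact div_le_div₀ ((abs_nonneg a).trans ha) ha hd hw

lemma integral_inv_ofReal_sub {w : ℂ} (hw : w.im ≠ 0) (a b : ℝ) :
    ∫ t in a..b, ((t : ℂ) - w)⁻¹ = log (b - w) - log (a - w) := by
  have hslit : ∀ t : ℝ, (t : ℂ) - w ∈ slitPlane := fun t =>
    mem_slitPlane_iff.mpr (Or.inr (by simpa using hw))
  refine intervalIntegral.integral_eq_sub_of_hasDerivAt (f := fun t : ℝ => log ((t : ℂ) - w))
    (fun t _ => ?_) ?_
  · simpa using
      ((hasDerivAt_log (hslit t)).comp (t : ℂ) ((hasDerivAt_id _).sub_const w)).comp_ofReal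
  · exact (continuous_ofReal.sub continuous_const).inv₀ (fun t => slitPlane_ne_zero (hslit t))
      |>.intervalIntegrable a b

lemma tendsto_ofReal_add_mul_I_nhdsWithin_upper (x : ℝ) :
    Tendsto (fun y : ℝ => (x : ℂ) + y * I) (𝓝[>] 0) (𝓝[{z | 0 < z.im}] (x : ℂ)) := by
  refine tendsto_nhdsWithin_iff.mpr
    ⟨?_, eventually_nhdsWithin_of_forall fun y hy => by simpa using hy⟩
  have : Continuous fun y : ℝ => (x : ℂ) + y * I := by fun_prop
  simpa using this.tendsto' 0 _ (by simp) |>.mono_left nhdsWithin_le_nhds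

lemma tendsto_log_ofReal_sub_nhdsWithin_upper {s x : ℝ} (h : s < x) :
    Tendsto (fun z : ℂ => log (s - z)) (𝓝[{z | 0 < z.im}] (x : ℂ))
      (𝓝 (Real.log (x - s) - π * I)) := by
  have hlog := tendsto_log_nhdsWithin_im_neg_of_re_neg_of_im_zero (z := (s : ℂ) - x)
    (by simpa using h) (by simp)
  have hnorm : ‖(s : ℂ) - x‖ = x - s := by
    rw [← ofReal_sub, norm_real, Real.norm_eq_abs, abs_of_neg (by linarith), neg_sub]
  rw [hnorm] at hlog
  have hmaps : Set.MapsTo (fun z : ℂ => (s : ℂ) - z) {z | 0 < z.im} {z | z.im < 0} :=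
    fun z (hz : 0 < z.im) => show ((s : ℂ) - z).im < 0 by simpa using hz
  exact hlog.comp <| (continuous_sub_left (s : ℂ)).continuousWithinAt.tendsto_nhdsWithin hmaps

section CauchyIntegral

variable {ξ : ℝ → ℝ} {M : ℝ}

lemma intervalIntegrable_ofReal_div_sub (hmeas : Measurable ξ) (hξ : ∀ t, |ξ t| ≤ M)
    {z : ℂ} (hz : z.im ≠ 0) (a b : ℝ) :
    IntervalIntegrable (fun t : ℝ => (ξ t : ℂ) / ((t : ℂ) - z)) volume a b := by
  refine (intervalIntegrable_const (c := M / |z.im|)).mono_fun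
    (by fun_prop : Measurable fun t : ℝ => (ξ t : ℂ) / ((t : ℂ) - z)).aestronglyMeasurable
    (ae_of_all _ fun t => ?_)
  refine (norm_ofReal_div_le (hξ t) (abs_pos.mpr hz) ?_).trans (le_abs_self _)
  simpa using abs_im_le_norm ((t : ℂ) - z)

lemma continuousAt_integral_ofReal_div_sub (hmeas : Measurable ξ) (hξ : ∀ t, |ξ t| ≤ M)
    {a b x : ℝ} (hx : x ∉ Set.uIcc a b) :
    ContinuousAt (fun z : ℂ => ∫ t in a..b, (ξ t : ℂ) / ((t : ℂ) - z)) x := by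
  set d := Metric.infDist x (Set.uIcc a b)
  have hd : 0 < d := (isClosed_Icc.notMem_iff_infDist_pos Set.nonempty_uIcc).mp hx
  have hfar : ∀ t ∈ Set.uIcc a b, ∀ z ∈ Metric.ball (x : ℂ) (d / 2), d / 2 ≤ ‖(t : ℂ) - z‖ := by
    intro t ht z hz
    have htx : d ≤ ‖(t : ℂ) - x‖ := by
      rw [← ofReal_sub, norm_real, ← dist_eq_norm, dist_comm]
      exact Metric.infDist_le_dist_of_mem ht
    have htri := norm_sub_norm_le ((t : ℂ) - x) ((t : ℂ) - z)
    rw [Metric.mem_ball, Complex.dist_eq] at hz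
    rw [sub_sub_sub_cancel_left] at htri
    linarith
  refine intervalIntegral.continuousAt_of_dominated_interval (bound := fun _ => M / (d / 2))
    (Eventually.of_forall fun z => (by fun_prop : Measurable _).aestronglyMeasurable) ?_
    intervalIntegrable_const (ae_of_all _ fun t ht => ?_)
  · filter_upwards [Metric.ball_mem_nhds (x : ℂ) (half_pos hd)] with z hz
    exact ae_of_all _ fun t ht =>
      norm_ofReal_div_le (hξ t) (half_pos hd) (hfar t (Set.uIoc_subset_uIcc ht) z hz)
  · have hne : (t : ℂ) - x ≠ 0 := norm_pos_iff.mp <| (half_pos hd).trans_le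
      (hfar t (Set.uIoc_subset_uIcc ht) x (Metric.mem_ball_self (half_pos hd)))
    exact continuousAt_const.div (continuousAt_const.sub continuousAt_id) hne

lemma integral_ofReal_div_sub_of_ae_eq_const {a b c : ℝ} (hab : a ≤ b)
    (hc : ∀ᵐ t ∂(volume.restrict (Set.Ioo a b)), ξ t = c) {z : ℂ} (hz : z.im ≠ 0) :
    ∫ t in a..b, (ξ t : ℂ) / ((t : ℂ) - z) = c * (log (b - z) - log (a - z)) := by
  calc ∫ t in a..b, (ξ t : ℂ) / ((t : ℂ) - z) = ∫ t in a..b, (c : ℂ) * ((t : ℂ) - z)⁻¹ := by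
        simp only [intervalIntegral.integral_of_le hab, integral_Ioc_eq_integral_Ioo]
        refine setIntegral_congr_ae measurableSet_Ioo ?_
        filter_upwards [(ae_restrict_iff' measurableSet_Ioo).mp hc] with t ht htab
        rw [ht htab, div_eq_mul_inv]
    _ = c * (log (b - z) - log (a - z)) := by
        rw [intervalIntegral.integral_const_mul, integral_inv_ofReal_sub hz]

lemma im_integral_ofReal_div_sub_ofReal (a b x : ℝ) :
    (∫ t in a..b, (ξ t : ℂ) / ((t : ℂ) - x)).im = 0 := by
  simp_rw [← ofReal_sub, ← ofReal_div, intervalIntegral.integral_ofReal, ofReal_im]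

lemma exists_tendsto_integral_ofReal_div_sub_nhdsWithin_upper
    (hmeas : Measurable ξ) (hξ : ∀ t, |ξ t| ≤ M) {lo a b hi c x : ℝ} (hlo : lo ≤ a) (hhi : b ≤ hi)
    (hc : ∀ᵐ t ∂(volume.restrict (Set.Ioo a b)), ξ t = c) (hx : x ∈ Set.Ioo a b) :
    ∃ S : ℂ, S.im = c * π ∧ Tendsto (fun z : ℂ => ∫ t in lo..hi, (ξ t : ℂ) / ((t : ℂ) - z))
      (𝓝[{z | 0 < z.im}] (x : ℂ)) (𝓝 S) := by
  let T : ℝ → ℝ → ℂ → ℂ := fun p q z => ∫ t in p..q, (ξ t : ℂ) / ((t : ℂ) - z)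
  have hsplit : ∀ z : ℂ, 0 < z.im →
      T lo a z + c * (log (b - z) - log (a - z)) + T b hi z = T lo hi z := by
    intro z hz
    have hint := intervalIntegrable_ofReal_div_sub hmeas hξ hz.ne'
    simp only [T]
    rw [← intervalIntegral.integral_add_adjacent_intervals (hint lo a) (hint a hi),
      ← intervalIntegral.integral_add_adjacent_intervals (hint a b) (hint b hi),
      integral_ofReal_div_sub_of_ae_eq_const (hx.1.trans hx.2).le hc hz.ne', add_assoc]
  have hleft : ContinuousAt (T lo a) x := continuousAt_integral_ofReal_div_sub hmeas hξ
    (by rw [Set.uIcc_of_le hlo]; exact fun h => hx.1.not_ge h.2)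
  have hright : ContinuousAt (T b hi) x := continuousAt_integral_ofReal_div_sub hmeas hξ
    (by rw [Set.uIcc_of_le hhi]; exact fun h => hx.2.not_ge h.1)
  have hlog : ContinuousAt (fun z : ℂ => log (b - z)) x :=
    (continuousAt_clog (mem_slitPlane_iff.mpr (Or.inl (by simpa using hx.2)))).comp
      (continuousAt_const.sub continuousAt_id)
  have hlog_im : (Complex.log ((b : ℂ) - x)).im = 0 := by
    rw [← ofReal_sub, ← ofReal_log (by linarith [hx.2]), ofReal_im]
  refine ⟨T lo a x + c * (Complex.log (b - x) - (Real.log (x - a) - π * I)) + T b hi x, ?_, ?_⟩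
  · simp [T, im_integral_ofReal_div_sub_ofReal, hlog_im]
  · refine Tendsto.congr' (eventually_nhdsWithin_of_forall hsplit) ?_
    exact (hleft.continuousWithinAt.tendsto.add ((hlog.continuousWithinAt.tendsto.sub
      (tendsto_log_ofReal_sub_nhdsWithin_upper hx.1)).const_mul _)).add
      hright.continuousWithinAt.tendsto

end CauchyIntegral

/-- For `ξ : [-R,R] → [0,1]` measurable with `ξ = 1/2` a.e. on `(-2,2)` and
`H(z) = (z+R)exp(∫_{-R}^R ξ(t)/(t-z) dt)` on the upper half plane, for a.e. `x ∈ (-2,2)`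
the boundary value `H(x) = lim_{y→0+} H(x+iy)` exists, is purely imaginary, and has
positive imaginary part (so `Im H(x) = |H(x)| > 0`). -/
theorem stmt_6 (R : ℝ) (hR : 2 < R) (ξ : ℝ → ℝ) (hmeas : Measurable ξ)
    (hξ0 : ∀ t, 0 ≤ ξ t) (hξ1 : ∀ t, ξ t ≤ 1)
    (hhalf : ∀ᵐ t ∂(volume.restrict (Set.Ioo (-2:ℝ) 2)), ξ t = 1/2)
    (H : ℂ → ℂ)
    (hH : ∀ z : ℂ, 0 < z.im →
      H z = (z + (R : ℂ)) * Complex.exp (∫ t in (-R)..R, ((ξ t : ℂ)) / ((t : ℂ) - z))) :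
    ∀ᵐ x : ℝ ∂(volume.restrict (Set.Ioo (-2:ℝ) 2)), ∃ L : ℂ,
      Tendsto (fun y : ℝ => H ((x : ℂ) + (y : ℂ) * Complex.I)) (nhdsWithin 0 (Set.Ioi 0)) (nhds L) ∧
      L.re = 0 ∧ L.im = ‖L‖ ∧ 0 < L.im := by
  have hξ : ∀ t, |ξ t| ≤ 1 := fun t => abs_le.mpr ⟨by linarith [hξ0 t], hξ1 t⟩
  refine ae_restrict_of_forall_mem measurableSet_Ioo fun x hx => ?_
  obtain ⟨S, hS, hlim⟩ := exists_tendsto_integral_ofReal_div_sub_nhdsWithin_upper hmeas hξ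
    (by linarith : -R ≤ -2) hR.le hhalf hx
  have hH_lim : Tendsto H (𝓝[{z | 0 < z.im}] (x : ℂ)) (𝓝 ((x + R) * exp S)) :=
    Tendsto.congr' (eventually_nhdsWithin_of_forall fun z hz => (hH z hz).symm)
      (((continuous_add_const (R : ℂ)).continuousWithinAt.tendsto).mul hlim.cexp)
  have hpos : 0 < (x + R) * Real.exp S.re := mul_pos (by linarith [hx.1]) (Real.exp_pos _)
  have hL : (x + R : ℂ) * exp S = ((x + R) * Real.exp S.re : ℝ) * I := by
    rw [exp_eq_exp_re_mul_sin_add_cos, hS, one_div_mul_eq_div, ofReal_div, ofReal_ofNat,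
      Complex.cos_pi_div_two, Complex.sin_pi_div_two]
    push_cast
    ring
  refine ⟨_, hH_lim.comp (tendsto_ofReal_add_mul_I_nhdsWithin_upper x), ?_⟩
  rw [hL]
  generalize (x + R) * Real.exp S.re = r at hpos ⊢
  exact ⟨by simp, by simp [abs_of_pos hpos], by simpa using hpos⟩
end

section
/- Let c < d be reals, x < c, and let ξ : (c, d) → [0, 1] be measurable with g = ∫_c^d ξ(t) dt. Then ∫_{d-g}^{d} 1/(t - x) dt ≤ ∫_c^d ξ(t)/(t - x) dt. -/
/-!
Only the monotonicity of `f t = 1 / (t - x)` on `[c, d]` matters. Put `a = d - g`. On `(c, a)`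
`f` is at least `f a` and on `(a, d)` at most `f a`, so
`∫_c^a ξ f ≥ f a · ∫_c^a ξ` and `∫_a^d (1 - ξ) f ≤ f a · ∫_a^d (1 - ξ)`.
The two weights have the same mass, `∫_c^a ξ = g - ∫_a^d ξ = ∫_a^d (1 - ξ)`, so subtracting the
second inequality from the first gives `∫_c^d ξ f - ∫_a^d f ≥ 0`.
-/

open MeasureTheory Set
open scoped Interval

theorem IntervalIntegrable.bdd_mul_of_forall_Ioo {w f : ℝ → ℝ} {p q C : ℝ} (hpq : p ≤ q)
    (hf : IntervalIntegrable f volume p q) (hw : AEStronglyMeasurable w volume)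
    (hC : ∀ t ∈ Ioo p q, ‖w t‖ ≤ C) :
    IntervalIntegrable (fun t => w t * f t) volume p q := by
  rw [intervalIntegrable_iff_integrableOn_Ioo_of_le hpq] at hf ⊢
  exact hf.bdd_mul hw.restrict (ae_restrict_of_forall_mem measurableSet_Ioo hC)

theorem IntervalIntegrable.of_forall_Ioo_norm_le {w : ℝ → ℝ} {p q C : ℝ} (hpq : p ≤ q)
    (hw : AEStronglyMeasurable w volume) (hC : ∀ t ∈ Ioo p q, ‖w t‖ ≤ C) :
    IntervalIntegrable w volume p q := by
  simpa using intervalIntegrable_const.bdd_mul_of_forall_Ioo hpq hw hC (f := fun _ => (1 : ℝ))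

namespace intervalIntegral

section Weighted

variable {w f : ℝ → ℝ} {p q m : ℝ}

lemma mul_integral_le_integral_mul (hpq : p ≤ q) (hw : IntervalIntegrable w volume p q)
    (hwf : IntervalIntegrable (fun t => w t * f t) volume p q)
    (hw0 : ∀ t ∈ Ioo p q, 0 ≤ w t) (hm : ∀ t ∈ Ioo p q, m ≤ f t) :
    m * ∫ t in p..q, w t ≤ ∫ t in p..q, w t * f t := by
  rw [← integral_const_mul]
  refine integral_mono_on_of_le_Ioo hpq (hw.const_mul m) hwf fun t ht => ?_
  rw [mul_comm]
  exact mul_le_mul_of_nonneg_left (hm t ht) (hw0 t ht)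

lemma integral_mul_le_mul_integral (hpq : p ≤ q) (hw : IntervalIntegrable w volume p q)
    (hwf : IntervalIntegrable (fun t => w t * f t) volume p q)
    (hw0 : ∀ t ∈ Ioo p q, 0 ≤ w t) (hm : ∀ t ∈ Ioo p q, f t ≤ m) :
    ∫ t in p..q, w t * f t ≤ m * ∫ t in p..q, w t := by
  rw [← integral_const_mul]
  refine integral_mono_on_of_le_Ioo hpq hwf (hw.const_mul m) fun t ht => ?_
  rw [mul_comm m]
  exact mul_le_mul_of_nonneg_left (hm t ht) (hw0 t ht)

end Weighted

section Bathtub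

variable {η f : ℝ → ℝ} {c d : ℝ}

lemma integral_mem_Icc_of_forall_Ioo (hcd : c ≤ d) (hη : Measurable η)
    (hη0 : ∀ t ∈ Ioo c d, 0 ≤ η t) (hη1 : ∀ t ∈ Ioo c d, η t ≤ 1) :
    (∫ t in c..d, η t) ∈ Icc 0 (d - c) := by
  have hηi : IntervalIntegrable η volume c d :=
    .of_forall_Ioo_norm_le hcd hη.aestronglyMeasurable fun t ht =>
      (Real.norm_of_nonneg (hη0 t ht)).trans_le (hη1 t ht)
  constructor
  · simpa using integral_mono_on_of_le_Ioo hcd intervalIntegrable_const hηi hη0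
  · simpa using integral_mono_on_of_le_Ioo hcd hηi intervalIntegrable_const hη1

lemma integral_le_integral_mul_of_integral_eq {a : ℝ} (hca : c ≤ a) (had : a ≤ d)
    (hf : AntitoneOn f (Icc c d)) (hη : Measurable η)
    (hη0 : ∀ t ∈ Ioo c d, 0 ≤ η t) (hη1 : ∀ t ∈ Ioo c d, η t ≤ 1)
    (hmass : ∫ t in c..d, η t = d - a) :
    ∫ t in a..d, f t ≤ ∫ t in c..d, η t * f t := by
  have hcd := hca.trans had
  have hη_norm : ∀ t ∈ Ioo c d, ‖η t‖ ≤ 1 := fun t ht =>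
    (Real.norm_of_nonneg (hη0 t ht)).trans_le (hη1 t ht)
  have hfi : IntervalIntegrable f volume c d := (uIcc_of_le hcd ▸ hf).intervalIntegrable
  have hηi : IntervalIntegrable η volume c d :=
    .of_forall_Ioo_norm_le hcd hη.aestronglyMeasurable hη_norm
  have hηfi := hfi.bdd_mul_of_forall_Ioo hcd hη.aestronglyMeasurable hη_norm
  have hsub_left : [[c, a]] ⊆ [[c, d]] := uIcc_subset_uIcc left_mem_uIcc (mem_uIcc_of_le hca had)
  have hsub_right : [[a, d]] ⊆ [[c, d]] :=
    uIcc_subset_uIcc (mem_uIcc_of_le hca had) right_mem_uIcc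
  have hleft : f a * ∫ t in c..a, η t ≤ ∫ t in c..a, η t * f t :=
    mul_integral_le_integral_mul hca (hηi.mono_set hsub_left) (hηfi.mono_set hsub_left)
      (fun t ht => hη0 t ⟨ht.1, ht.2.trans_le had⟩)
      (fun t ht => hf ⟨ht.1.le, ht.2.le.trans had⟩ ⟨hca, had⟩ ht.2.le)
  have hright : ∫ t in a..d, (1 - η t) * f t ≤ f a * ∫ t in a..d, (1 - η t) := by
    have hcoη_nonneg : ∀ t ∈ Ioo c d, 0 ≤ 1 - η t := fun t ht => sub_nonneg.2 (hη1 t ht)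
    have hcoηf := hfi.bdd_mul_of_forall_Ioo hcd (w := fun t => 1 - η t) (C := 1)
      (measurable_const.sub hη).aestronglyMeasurable fun t ht =>
        (Real.norm_of_nonneg (hcoη_nonneg t ht)).trans_le (by linarith [hη0 t ht])
    exact integral_mul_le_mul_integral had ((intervalIntegrable_const.sub hηi).mono_set hsub_right)
      (hcoηf.mono_set hsub_right) (fun t ht => hcoη_nonneg t ⟨hca.trans_lt ht.1, ht.2⟩)
      (fun t ht => hf ⟨hca, had⟩ ⟨hca.trans ht.1.le, ht.2.le⟩ ht.1.le)
  have hweight : ∫ t in a..d, (1 - η t) = ∫ t in c..a, η t := by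
    have hsplit := integral_add_adjacent_intervals (hηi.mono_set hsub_left)
      (hηi.mono_set hsub_right)
    rw [integral_sub intervalIntegrable_const (hηi.mono_set hsub_right), integral_const,
      smul_eq_mul, mul_one]
    linarith
  have hcomplement : ∫ t in a..d, (1 - η t) * f t
      = (∫ t in a..d, f t) - ∫ t in a..d, η t * f t := by
    simp_rw [sub_mul, one_mul]
    exact integral_sub (hfi.mono_set hsub_right) (hηfi.mono_set hsub_right)
  rw [← integral_add_adjacent_intervals (hηfi.mono_set hsub_left) (hηfi.mono_set hsub_right)]
  rw [hweight, hcomplement] at hright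
  linarith

theorem integral_le_integral_mul_of_antitoneOn (hcd : c ≤ d)
    (hf : AntitoneOn f (Icc c d)) (hη : Measurable η)
    (hη0 : ∀ t ∈ Ioo c d, 0 ≤ η t) (hη1 : ∀ t ∈ Ioo c d, η t ≤ 1) :
    ∫ t in (d - ∫ t in c..d, η t)..d, f t ≤ ∫ t in c..d, η t * f t := by
  obtain ⟨hmass_nonneg, hmass_le⟩ := integral_mem_Icc_of_forall_Ioo hcd hη hη0 hη1
  exact integral_le_integral_mul_of_integral_eq (by linarith) (by linarith) hf hη hη0 hη1
    (sub_sub_cancel _ _).symm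

end Bathtub

end intervalIntegral

/-- bathtub principle, `x < c`: for measurable `ξ : (c,d) → [0,1]` with
`g = ∫_c^d ξ`, one has `∫_{d-g}^d 1/(t-x) dt ≤ ∫_c^d ξ(t)/(t-x) dt`. -/
theorem stmt_8 (c d x : ℝ) (hcd : c < d) (hx : x < c)
    (ξ : ℝ → ℝ) (hm : Measurable ξ)
    (hξ0 : ∀ t ∈ Set.Ioo c d, 0 ≤ ξ t) (hξ1 : ∀ t ∈ Set.Ioo c d, ξ t ≤ 1)
    (g : ℝ) (hg : g = ∫ t in c..d, ξ t) :
    ∫ t in (d - g)..d, 1 / (t - x) ≤ ∫ t in c..d, ξ t / (t - x) := by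
  have hanti : AntitoneOn (fun t => 1 / (t - x)) (Icc c d) := fun s hs t _ hst =>
    one_div_le_one_div_of_le (by linarith [hs.1]) (by linarith)
  subst hg
  simpa only [div_eq_mul_one_div (ξ _)] using
    intervalIntegral.integral_le_integral_mul_of_antitoneOn hcd.le hanti hm hξ0 hξ1
end

section
/- Let c < d, 0 ≤ g ≤ d - c, and x < c. If ξ : (c, d) → [0, 1] is measurable with ∫_c^d ξ = g and ∫_c^d ξ(t)/(t - x) dt = ∫_{d-g}^d 1/(t - x) dt, then ξ = χ_{(d-g, d)} almost everywhere on (c, d). -/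
/-!
Put `a = d - g`, `χ = χ_{(a,d)}` and `k t = (t - x)⁻¹ - (a - x)⁻¹`. The two integral constraints
say that `ξ - χ` integrates to zero against `1` and against `(t - x)⁻¹`, hence against `k`.
Since `k` is positive left of `a` and negative right of it, while `ξ - χ` is `≥ 0` left of `a`
and `≤ 0` right of it, the integrand `(ξ - χ) k` is nonnegative; as its integral vanishes, it
vanishes a.e., which forces `ξ = χ` off the null set `{a}` where `k = 0`.
-/

open MeasureTheory Set

lemma sub_indicator_Ioi_mul_nonneg {y t a κ : ℝ} (hy0 : 0 ≤ y) (hy1 : y ≤ 1)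
    (hlt : t < a → 0 < κ) (hgt : a < t → κ < 0) (hta : t ≠ a) :
    0 ≤ (y - (Ioi a).indicator (fun _ => 1) t) * κ := by
  rcases hta.lt_or_gt with h | h
  · rw [indicator_of_notMem (notMem_Ioi.2 h.le), sub_zero]
    exact mul_nonneg hy0 (hlt h).le
  · rw [indicator_of_mem (mem_Ioi.2 h)]
    exact mul_nonneg_of_nonpos_of_nonpos (by linarith) (hgt h).le

lemma integral_sub_mul_sub_const_eq_zero {α : Type*} [MeasurableSpace α] {μ : Measure α}
    {s : Set α} {ξ η w : α → ℝ} (C : ℝ)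
    (hξ : IntegrableOn ξ s μ) (hη : IntegrableOn η s μ)
    (hξw : IntegrableOn (fun t => ξ t * w t) s μ) (hηw : IntegrableOn (fun t => η t * w t) s μ)
    (hmass : ∫ t in s, ξ t ∂μ = ∫ t in s, η t ∂μ)
    (hmoment : ∫ t in s, ξ t * w t ∂μ = ∫ t in s, η t * w t ∂μ) :
    ∫ t in s, (ξ t - η t) * (w t - C) ∂μ = 0 := by
  have hsplit : ∀ t, (ξ t - η t) * (w t - C) = (ξ t * w t - η t * w t) - C * (ξ t - η t) :=
    fun t => by ring
  simp_rw [hsplit]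
  rw [integral_sub (by exact hξw.sub hηw) (by exact (hξ.sub hη).const_mul C),
    integral_sub hξw hηw, integral_const_mul, integral_sub hξ hη, hmass, hmoment]
  ring

theorem ae_eq_indicator_Ioi_of_integral_eq {μ : Measure ℝ} [NullSingletonClass μ] {s : Set ℝ}
    {ξ w : ℝ → ℝ} {a C : ℝ}
    (hs : MeasurableSet s) (hμs : μ s < ⊤) (hξm : AEStronglyMeasurable ξ (μ.restrict s))
    (hξ0 : ∀ t ∈ s, 0 ≤ ξ t) (hξ1 : ∀ t ∈ s, ξ t ≤ 1) (hw : IntegrableOn w s μ)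
    (hw_gt : ∀ t ∈ s, t < a → C < w t) (hw_lt : ∀ t ∈ s, a < t → w t < C)
    (hmass : ∫ t in s, ξ t ∂μ = ∫ t in s, (Ioi a).indicator (fun _ => (1 : ℝ)) t ∂μ)
    (hmoment : ∫ t in s, ξ t * w t ∂μ = ∫ t in s, (Ioi a).indicator w t ∂μ) :
    ξ =ᵐ[μ.restrict s] (Ioi a).indicator (fun _ => 1) := by
  set χ := (Ioi a).indicator (fun _ => (1 : ℝ))
  have hχm : AEStronglyMeasurable χ (μ.restrict s) :=
    (measurable_const.indicator measurableSet_Ioi).aestronglyMeasurable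
  have hχ0 : ∀ t, 0 ≤ χ t := indicator_nonneg fun _ _ => zero_le_one
  have hχ1 : ∀ t, χ t ≤ 1 := indicator_le' (fun _ _ => le_rfl) fun _ _ => zero_le_one
  have hχw : ∀ t, χ t * w t = (Ioi a).indicator w t := fun t => by
    by_cases h : t ∈ Ioi a <;> simp [χ, h]
  have hξb : ∀ᵐ t ∂μ.restrict s, ‖ξ t‖ ≤ 1 := (ae_restrict_iff' hs).2 <| .of_forall
    fun t ht => abs_le.2 ⟨by linarith [hξ0 t ht], hξ1 t ht⟩
  have hχb : ∀ᵐ t ∂μ.restrict s, ‖χ t‖ ≤ 1 := .of_forall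
    fun t => abs_le.2 ⟨by linarith [hχ0 t], hχ1 t⟩
  have hdiffb : ∀ᵐ t ∂μ.restrict s, ‖ξ t - χ t‖ ≤ 1 := (ae_restrict_iff' hs).2 <| .of_forall
    fun t ht => abs_sub_le_of_nonneg_of_le (hξ0 t ht) (hξ1 t ht) (hχ0 t) (hχ1 t)
  have hzero : ∫ t in s, (ξ t - χ t) * (w t - C) ∂μ = 0 := by
    refine integral_sub_mul_sub_const_eq_zero C (.of_bound hμs hξm 1 hξb) (.of_bound hμs hχm 1 hχb)
      (hw.bdd_mul hξm hξb) (hw.bdd_mul hχm hχb) hmass ?_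
    simpa only [hχw] using hmoment
  have hint : IntegrableOn (fun t => (ξ t - χ t) * (w t - C)) s μ :=
    (hw.sub (integrableOn_const hμs.ne)).bdd_mul (hξm.sub hχm) hdiffb
  have hne : ∀ᵐ t ∂μ.restrict s, t ≠ a := ae_restrict_of_ae ((countable_singleton a).ae_notMem μ)
  have hnonneg : 0 ≤ᵐ[μ.restrict s] fun t => (ξ t - χ t) * (w t - C) := by
    filter_upwards [hne, ae_restrict_mem hs] with t hta ht
    exact sub_indicator_Ioi_mul_nonneg (hξ0 t ht) (hξ1 t ht)
      (fun h => sub_pos.2 (hw_gt t ht h)) (fun h => sub_neg.2 (hw_lt t ht h)) hta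
  filter_upwards [(integral_eq_zero_iff_of_nonneg_ae hnonneg hint).1 hzero, hne,
    ae_restrict_mem hs] with t h hta ht
  have hk : w t - C ≠ 0 := by
    rcases hta.lt_or_gt with h | h
    · exact (sub_pos.2 (hw_gt t ht h)).ne'
    · exact (sub_neg.2 (hw_lt t ht h)).ne
  exact sub_eq_zero.1 ((mul_eq_zero.1 h).resolve_right hk)

/-- equality case of the bathtub principle, `x < c`: if
`∫_c^d ξ(t)/(t-x) dt = ∫_{d-g}^d 1/(t-x) dt`, then `ξ = χ_{(d-g,d)}` a.e. on `(c,d)`. -/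
theorem stmt_10 (c d x g : ℝ) (hcd : c < d) (hx : x < c)
    (hg0 : 0 ≤ g) (hg1 : g ≤ d - c)
    (ξ : ℝ → ℝ) (hm : Measurable ξ)
    (hξ0 : ∀ t ∈ Set.Ioo c d, 0 ≤ ξ t) (hξ1 : ∀ t ∈ Set.Ioo c d, ξ t ≤ 1)
    (hg : ∫ t in c..d, ξ t = g)
    (heq : ∫ t in c..d, ξ t / (t - x) = ∫ t in (d - g)..d, 1 / (t - x)) :
    ∀ᵐ t ∂(volume.restrict (Set.Ioo c d)),
      ξ t = Set.indicator (Set.Ioo (d - g) d) (fun _ => 1) t := by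
  set a := d - g
  have hca : c ≤ a := by linarith
  have had : a ≤ d := by linarith
  have hinter : Ioo c d ∩ Ioi a = Ioo a d := by rw [Ioo_inter_Ioi, max_eq_right hca]
  have hset : ∀ {p q : ℝ} (f : ℝ → ℝ), p ≤ q → ∫ t in p..q, f t = ∫ t in Ioo p q, f t :=
    fun f hpq => by rw [intervalIntegral.integral_of_le hpq, integral_Ioc_eq_integral_Ioo]
  have hw : IntegrableOn (fun t => (t - x)⁻¹) (Ioo c d) :=
    (ContinuousOn.integrableOn_Icc (continuousOn_id.sub continuousOn_const |>.inv₀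
      fun t ht => (sub_pos.2 (hx.trans_le ht.1)).ne')).mono_set Ioo_subset_Icc_self
  have hmass : ∫ t in Ioo c d, ξ t = ∫ t in Ioo c d, (Ioi a).indicator (fun _ => (1 : ℝ)) t := by
    rw [← hset _ hcd.le, hg, setIntegral_indicator measurableSet_Ioi, hinter]
    simp [a, hg0]
  have hmoment : ∫ t in Ioo c d, ξ t * (t - x)⁻¹ =
      ∫ t in Ioo c d, (Ioi a).indicator (fun t => (t - x)⁻¹) t := by
    rw [setIntegral_indicator measurableSet_Ioi, hinter, ← hset _ hcd.le, ← hset _ had]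
    simpa only [div_eq_mul_inv, one_mul] using heq
  have hae := ae_eq_indicator_Ioi_of_integral_eq (C := (a - x)⁻¹) measurableSet_Ioo
    (by simp) hm.aestronglyMeasurable hξ0 hξ1 hw
    (fun t ht hta => inv_strictAnti₀ (by linarith [ht.1]) (by linarith))
    (fun t ht hta => inv_strictAnti₀ (by linarith) (by linarith)) hmass hmoment
  filter_upwards [hae, ae_restrict_mem measurableSet_Ioo] with t h ht
  rw [h]
  by_cases hta : a < t <;> simp [hta, ht.2]
end

section
/- Let H(z) = (z + R) exp(∫_{-R}^{R} ξ(t)/(t - z) dt) with ξ measurable, 0 ≤ ξ ≤ 1. Then H is a Herglotz function: it is holomorphic on the upper half plane ℂ₊ and maps ℂ₊ into ℂ₊. -/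
/-!
Write `C(z) = ∫_a^b ξ(t) / (t - z) dt`. Differentiation under the integral sign (the integrand's
`z`-derivative is dominated by `|ξ| (2 / |Im z₀|)²` near `z₀`) makes `C` holomorphic off the real
line. For `Im z > 0` the kernel `Im (1 / (t - z))` is nonnegative, so `0 ≤ ξ ≤ 1` gives
`0 ≤ Im C(z) ≤ Im ∫_a^b dt / (t - z) = arg (b - z) - arg (a - z)`, since `log (t - z)` is a
primitive of `1 / (t - z)`. As `arg (z - a) = arg (a - z) + π` and `arg (b - z) < 0`, the argument
`arg (z - a) + Im C(z)` of `(z - a) exp C(z)` lies in `(0, π)`.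
-/

open MeasureTheory Complex
open scoped Real

theorem IntervalIntegrable.ofReal {f : ℝ → ℝ} {a b : ℝ} {μ : Measure ℝ}
    (hf : IntervalIntegrable f μ a b) : IntervalIntegrable (fun t => (f t : ℂ)) μ a b :=
  ⟨hf.1.ofReal, hf.2.ofReal⟩

noncomputable def cauchyTransform (ξ : ℝ → ℂ) (a b : ℝ) (z : ℂ) : ℂ :=
  ∫ t in a..b, ξ t / ((t : ℂ) - z)

theorem abs_im_le_norm_ofReal_sub (t : ℝ) (z : ℂ) : |z.im| ≤ ‖(t : ℂ) - z‖ := by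
  simpa using abs_im_le_norm ((t : ℂ) - z)

theorem ofReal_sub_ne_zero {z : ℂ} (hz : z.im ≠ 0) (t : ℝ) : (t : ℂ) - z ≠ 0 := by
  intro h
  simpa [hz] using congrArg im h

theorem continuous_inv_ofReal_sub {z : ℂ} (hz : z.im ≠ 0) :
    Continuous fun t : ℝ => ((t : ℂ) - z)⁻¹ :=
  (continuous_ofReal.sub continuous_const).inv₀ (ofReal_sub_ne_zero hz)

theorem IntervalIntegrable.div_ofReal_sub_pow {ξ : ℝ → ℂ} {a b : ℝ}
    (hξ : IntervalIntegrable ξ volume a b) {z : ℂ} (hz : z.im ≠ 0) (n : ℕ) :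
    IntervalIntegrable (fun t => ξ t / ((t : ℂ) - z) ^ n) volume a b := by
  have hpow : Continuous fun t : ℝ => ((t : ℂ) - z)⁻¹ ^ n := (continuous_inv_ofReal_sub hz).pow n
  simpa only [div_eq_mul_inv, inv_pow] using hξ.mul_continuousOn hpow.continuousOn

theorem hasDerivAt_div_sub (c w z : ℂ) (h : w - z ≠ 0) :
    HasDerivAt (fun z => c / (w - z)) (c / (w - z) ^ 2) z := by
  simpa using (hasDerivAt_const z c).fun_div ((hasDerivAt_id z).const_sub w) h

theorem hasDerivAt_cauchyTransform {ξ : ℝ → ℂ} {a b : ℝ} (hξ : IntervalIntegrable ξ volume a b)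
    {z₀ : ℂ} (hz₀ : z₀.im ≠ 0) :
    HasDerivAt (cauchyTransform ξ a b) (∫ t in a..b, ξ t / ((t : ℂ) - z₀) ^ 2) z₀ := by
  set δ := |z₀.im| / 2 with hδ
  have hδ_pos : 0 < δ := by positivity
  have hδ_le : ∀ z ∈ Metric.ball z₀ δ, ∀ t : ℝ, δ ≤ ‖(t : ℂ) - z‖ := by
    intro z hz t
    have h1 : |z₀.im| - |z.im| ≤ ‖z - z₀‖ := by
      calc |z₀.im| - |z.im| ≤ |(z - z₀).im| := by
            rw [sub_im]; linarith [abs_sub_abs_le_abs_sub z₀.im z.im, abs_sub_comm z₀.im z.im]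
        _ ≤ ‖z - z₀‖ := abs_im_le_norm _
    have h2 : ‖z - z₀‖ < δ := by rwa [Metric.mem_ball, dist_eq] at hz
    linarith [abs_im_le_norm_ofReal_sub t z]
  have hne : ∀ z ∈ Metric.ball z₀ δ, ∀ t : ℝ, (t : ℂ) - z ≠ 0 := fun z hz t =>
    norm_pos_iff.1 (hδ_pos.trans_le (hδ_le z hz t))
  refine (intervalIntegral.hasDerivAt_integral_of_dominated_loc_of_deriv_le
    (F' := fun z t => ξ t / ((t : ℂ) - z) ^ 2) (bound := fun t => ‖ξ t‖ * (δ ^ 2)⁻¹)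
    (Metric.ball_mem_nhds z₀ hδ_pos) ?_ ?_ ?_ ?_ ?_ ?_).2
  · filter_upwards [(isOpen_ne_fun continuous_im continuous_const).mem_nhds hz₀] with z hz
    simpa using (hξ.div_ofReal_sub_pow hz 1).def'.aestronglyMeasurable
  · simpa using hξ.div_ofReal_sub_pow hz₀ 1
  · exact (hξ.div_ofReal_sub_pow hz₀ 2).def'.aestronglyMeasurable
  · refine Filter.Eventually.of_forall fun t _ z hz => ?_
    rw [norm_div, norm_pow, div_eq_mul_inv]
    gcongr
    exact hδ_le z hz t
  · exact hξ.norm.mul_const _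
  · exact Filter.Eventually.of_forall fun t _ z hz => hasDerivAt_div_sub _ _ _ (hne z hz t)

theorem cauchyTransform_one (a b : ℝ) {z : ℂ} (hz : z.im ≠ 0) :
    cauchyTransform 1 a b z = log (b - z) - log (a - z) := by
  have hlog : ∀ t : ℝ, HasDerivAt (fun t : ℝ => log ((t : ℂ) - z)) (1 / ((t : ℂ) - z)) t :=
    fun t => by
      simpa using ((hasDerivAt_id t).ofReal_comp.sub_const z).clog_real
        (mem_slitPlane_iff.2 (Or.inr (by simpa using hz)))
  exact intervalIntegral.integral_eq_sub_of_hasDerivAt (fun t _ => hlog t)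
    (by simpa using (intervalIntegrable_const (c := (1 : ℂ))).div_ofReal_sub_pow hz 1)

theorem im_inv_ofReal_sub_nonneg (t : ℝ) {z : ℂ} (hz : 0 ≤ z.im) : 0 ≤ ((t : ℂ) - z)⁻¹.im := by
  rw [inv_im]
  simp only [sub_im, ofReal_im, zero_sub, neg_neg]
  exact div_nonneg hz (normSq_nonneg _)

theorem im_cauchyTransform_ofReal {ξ : ℝ → ℝ} {a b : ℝ} (hξ : IntervalIntegrable ξ volume a b)
    {z : ℂ} (hz : z.im ≠ 0) :
    (cauchyTransform (fun t => ξ t) a b z).im = ∫ t in a..b, ξ t * ((t : ℂ) - z)⁻¹.im := by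
  have hint : IntervalIntegrable (fun t => (ξ t : ℂ) / ((t : ℂ) - z)) volume a b := by
    simpa using hξ.ofReal.div_ofReal_sub_pow hz 1
  rw [cauchyTransform, ← RCLike.im_to_complex, ← intervalIntegral.intervalIntegral_im hint]
  simp [div_eq_mul_inv]

theorem im_cauchyTransform_mem_Icc {ξ : ℝ → ℝ} {a b : ℝ} (hab : a ≤ b)
    (hξ : IntervalIntegrable ξ volume a b) (h0 : ∀ t ∈ Set.Icc a b, 0 ≤ ξ t)
    (h1 : ∀ t ∈ Set.Icc a b, ξ t ≤ 1) {z : ℂ} (hz : 0 < z.im) :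
    (cauchyTransform (fun t => ξ t) a b z).im ∈ Set.Icc 0 (arg (b - z) - arg (a - z)) := by
  have hk (t : ℝ) := im_inv_ofReal_sub_nonneg t hz.le
  have hk_cont : Continuous fun t : ℝ => ((t : ℂ) - z)⁻¹.im :=
    continuous_im.comp (continuous_inv_ofReal_sub hz.ne')
  have hone : (cauchyTransform (fun t => ((1 : ℝ) : ℂ)) a b z).im = arg (b - z) - arg (a - z) := by
    rw [← log_im, ← log_im, ← sub_im, ← cauchyTransform_one a b hz.ne']
    rfl
  rw [im_cauchyTransform_ofReal hξ hz.ne']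
  rw [im_cauchyTransform_ofReal intervalIntegrable_const hz.ne'] at hone
  simp only [one_mul] at hone
  refine ⟨intervalIntegral.integral_nonneg hab fun t ht => mul_nonneg (h0 t ht) (hk t), ?_⟩
  rw [← hone]
  exact intervalIntegral.integral_mono_on hab (hξ.mul_continuousOn hk_cont.continuousOn)
    (hk_cont.intervalIntegrable a b) fun t ht => mul_le_of_le_one_left (hk t) (h1 t ht)

theorem im_mul_exp_pos {u w : ℂ} (hu : u ≠ 0) (h0 : 0 < arg u + w.im) (h1 : arg u + w.im < π) :
    0 < (u * exp w).im := by
  have him : (u * exp w).im = ‖u‖ * Real.exp w.re * Real.sin (arg u + w.im) := by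
    rw [mul_im, exp_re, exp_im, ← norm_mul_cos_arg u, ← norm_mul_sin_arg u, Real.sin_add]
    ring
  rw [him]
  have := Real.sin_pos_of_pos_of_lt_pi h0 h1
  positivity

theorem im_sub_mul_exp_cauchyTransform_pos {ξ : ℝ → ℝ} {a b : ℝ} (hab : a ≤ b)
    (hξ : IntervalIntegrable ξ volume a b) (h0 : ∀ t ∈ Set.Icc a b, 0 ≤ ξ t)
    (h1 : ∀ t ∈ Set.Icc a b, ξ t ≤ 1) {z : ℂ} (hz : 0 < z.im) :
    0 < ((z - a) * exp (cauchyTransform (fun t => ξ t) a b z)).im := by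
  obtain ⟨hlo, hhi⟩ := im_cauchyTransform_mem_Icc hab hξ h0 h1 hz
  have harg : arg (z - a) = arg (a - z) + π := by
    rw [← neg_sub, arg_neg_eq_arg_add_pi_of_im_neg (by simpa using hz)]
  have hb : arg (b - z) < 0 := arg_neg_iff.2 (by simpa using hz)
  refine im_mul_exp_pos (sub_ne_zero.2 fun h => by simp [h] at hz) ?_ ?_
  · linarith [neg_pi_lt_arg (a - z)]
  · linarith

/-- `H(z) = (z+R)exp(∫_{-R}^R ξ(t)/(t-z) dt)` with `ξ` measurable,
`0 ≤ ξ ≤ 1`, is a Herglotz function: holomorphic on the upper half plane, mapping it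
into itself. -/
theorem stmt_16 (R : ℝ) (hR : 0 < R) (ξ : ℝ → ℝ) (hm : Measurable ξ)
    (hξ0 : ∀ t, 0 ≤ ξ t) (hξ1 : ∀ t, ξ t ≤ 1)
    (H : ℂ → ℂ)
    (hH : ∀ z : ℂ, H z = (z + (R : ℂ)) *
      Complex.exp (∫ t in (-R)..R, ((ξ t : ℂ)) / ((t : ℂ) - z))) :
    DifferentiableOn ℂ H {z : ℂ | 0 < z.im} ∧
    ∀ z : ℂ, 0 < z.im → 0 < (H z).im := by
  have hH' : H = fun z => (z - ((-R : ℝ) : ℂ)) * exp (cauchyTransform (fun t => ξ t) (-R) R z) := by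
    funext z
    rw [hH z, ofReal_neg, sub_neg_eq_add, cauchyTransform]
  have hξ : IntervalIntegrable ξ volume (-R) R :=
    intervalIntegrable_const.mono_fun' hm.aestronglyMeasurable
      (ae_of_all _ fun t => (abs_of_nonneg (hξ0 t)).trans_le (hξ1 t))
  subst hH'
  refine ⟨fun z hz => ?_, fun z hz => ?_⟩
  · have hC := (hasDerivAt_cauchyTransform hξ.ofReal (ne_of_gt hz)).differentiableAt
    exact ((differentiableAt_id.sub_const _).mul hC.cexp).differentiableWithinAt
  · exact im_sub_mul_exp_cauchyTransform_pos (by linarith) hξ (fun t _ => hξ0 t)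
      (fun t _ => hξ1 t) hz
end
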